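/- arXiv:1509.04610 — 2 statements merged into one kernel-verified Lean document; each statement's English description precedes it below -/
import Mathlib

section
/- Let F, D, N be finite index types, X an N×F real matrix, U an N×D real matrix, Λ a positive definite F×F real matrix, and S an F×F real matrix with S·Sᵀ = Λ. Let Λ_e be an invertible D×D real matrix. Let (Ω, P) be a probability space and E₁ : Ω → Matrix N D ℝ, E₂ : Ω → Matrix F D ℝ be random matrices with square-integrable entries satisfying, for all columns i, j ∈ D: (a) every entry of E₁ and E₂ has expectation 0; (b) E[(E₁)_{·i} ((E₁)_{·j})ᵀ] = (Λ_e⁻¹)_{ij} · I_N entrywise; (c) E[(E₂)_{·i} ((E₂)_{·j})ᵀ] = (Λ_e⁻¹)_{ij} · I_F entrywise; (d) E[(E₂)_{·i} ((E₁)_{·j})ᵀ] = 0 and E[(E₁)_{·i} ((E₂)_{·j})ᵀ] = 0 entrywise. Define β̃ = (XᵀX + Λ)⁻¹(Xᵀ(U + E₁) + S·E₂) and β̂ = (XᵀX + Λ)⁻¹XᵀU. Then for all i, j ∈ D, the covariance matrix E[(β̃_{·i} − β̂_{·i})(β̃_{·j} − β̂_{·j})ᵀ] equals (Λ_e⁻¹)_{ij}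 · (XᵀX + Λ)⁻¹ entrywise. -/
/-!
The deviation `β̃ - β̂ = A (Xᵀ E₁ + S E₂)`, with `A = (XᵀX + Λ)⁻¹`, is `G W` for the block row
`G = [A Xᵀ | A S]` and the stacked noise `W = [E₁; E₂]`. The moment assumptions say that columns
`i, j` of `W` have cross second moment `(Λe⁻¹)ᵢⱼ • 1`, so the covariance is `(Λe⁻¹)ᵢⱼ • G Gᵀ`, and
`G Gᵀ = A (XᵀX + S Sᵀ) A = A (XᵀX + Λ) A = A` because `A` is symmetric (the last step holds
for any square matrix, a singular one having junk inverse `0`).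
-/

open Matrix MeasureTheory

namespace Matrix

variable {m n n₁ n₂ α : Type*}

lemma nonsing_inv_mul_mul_nonsing_inv [Fintype n] [DecidableEq n] [CommRing α]
    (A : Matrix n n α) : A⁻¹ * A * A⁻¹ = A⁻¹ := by
  by_cases h : IsUnit A.det
  · rw [nonsing_inv_mul A h, Matrix.one_mul]
  · rw [nonsing_inv_apply_not_isUnit A h, Matrix.zero_mul, Matrix.zero_mul]

lemma fromCols_mul_transpose_fromCols [Fintype n₁] [Fintype n₂] [CommSemiring α]
    (A₁ : Matrix m n₁ α) (A₂ : Matrix m n₂ α) :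
    fromCols A₁ A₂ * (fromCols A₁ A₂)ᵀ = A₁ * A₁ᵀ + A₂ * A₂ᵀ := by
  rw [transpose_fromCols, fromCols_mul_fromRows]

end Matrix

theorem integral_mul_apply_mul_mul_apply {Ω K m m' D : Type*} [MeasurableSpace Ω]
    {P : Measure Ω} [Fintype K]
    (W : Ω → Matrix K D ℝ) (hW : ∀ k d, MemLp (fun ω => W ω k d) 2 P)
    (B : Matrix m K ℝ) (C : Matrix m' K ℝ) (a : m) (b : m') (i j : D) :
    ∫ ω, (B * W ω) a i * (C * W ω) b j ∂P
      = (B * of (fun k k' => ∫ ω, W ω k i * W ω k' j ∂P) * Cᵀ) a b := by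
  have hint : ∀ k k', Integrable (fun ω => W ω k i * W ω k' j) P :=
    fun k k' => (hW k i).integrable_mul (hW k' j)
  calc ∫ ω, (B * W ω) a i * (C * W ω) b j ∂P
      = ∫ ω, ∑ k, ∑ k', B a k * C b k' * (W ω k i * W ω k' j) ∂P := by
        simp_rw [mul_apply, Finset.sum_mul_sum, mul_mul_mul_comm]
    _ = ∑ k, ∑ k', B a k * C b k' * ∫ ω, W ω k i * W ω k' j ∂P := by
        rw [integral_finsetSum _ fun k _ =>
          integrable_finsetSum _ fun k' _ => (hint k k').const_mul _]
        simp_rw [integral_finsetSum _ fun k' _ => (hint _ k').const_mul _, integral_const_mul]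
    _ = _ := by
        simp only [mul_apply, transpose_apply, of_apply, Finset.sum_mul]
        rw [Finset.sum_comm]
        simp only [mul_right_comm]

theorem noise_injection_covariance_general
    {F D N : Type*} [Fintype F] [Fintype D] [Fintype N]
    [DecidableEq F] [DecidableEq N] [DecidableEq D]
    (X : Matrix N F ℝ) (U : Matrix N D ℝ) (Λ S : Matrix F F ℝ)
    (hS : S * Sᵀ = Λ)
    (Λe : Matrix D D ℝ)
    {Ω : Type*} [MeasurableSpace Ω] (P : Measure Ω)
    (E₁ : Ω → Matrix N D ℝ) (E₂ : Ω → Matrix F D ℝ)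
    (hE₁L2 : ∀ n d, MemLp (fun ω => E₁ ω n d) 2 P)
    (hE₂L2 : ∀ f d, MemLp (fun ω => E₂ ω f d) 2 P)
    (hE₁cov : ∀ (i j : D) (n n' : N),
      ∫ ω, E₁ ω n i * E₁ ω n' j ∂P = Λe⁻¹ i j * (1 : Matrix N N ℝ) n n')
    (hE₂cov : ∀ (i j : D) (f f' : F),
      ∫ ω, E₂ ω f i * E₂ ω f' j ∂P = Λe⁻¹ i j * (1 : Matrix F F ℝ) f f')
    (hcross₂₁ : ∀ (i j : D) (f : F) (n : N), ∫ ω, E₂ ω f i * E₁ ω n j ∂P = 0)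
    (hcross₁₂ : ∀ (i j : D) (n : N) (f : F), ∫ ω, E₁ ω n i * E₂ ω f j ∂P = 0)
    (i j : D) (f f' : F) :
    ∫ ω, (((Xᵀ * X + Λ)⁻¹ * (Xᵀ * (U + E₁ ω) + S * E₂ ω)) f i
            - ((Xᵀ * X + Λ)⁻¹ * (Xᵀ * U)) f i)
        * (((Xᵀ * X + Λ)⁻¹ * (Xᵀ * (U + E₁ ω) + S * E₂ ω)) f' j
            - ((Xᵀ * X + Λ)⁻¹ * (Xᵀ * U)) f' j) ∂P
      = Λe⁻¹ i j * (Xᵀ * X + Λ)⁻¹ f f' := by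
  subst hS
  set A := (Xᵀ * X + S * Sᵀ)⁻¹
  set G : Matrix F (N ⊕ F) ℝ := fromCols (A * Xᵀ) (A * S)
  set W : Ω → Matrix (N ⊕ F) D ℝ := fun ω => fromRows (E₁ ω) (E₂ ω)
  have hdev : ∀ ω, A * (Xᵀ * (U + E₁ ω) + S * E₂ ω) - A * (Xᵀ * U) = G * W ω := fun ω => by
    rw [fromCols_mul_fromRows]
    simp only [Matrix.mul_add, Matrix.mul_assoc]
    abel
  have hW : ∀ k d, MemLp (fun ω => W ω k d) 2 P := by
    rintro (n | f) d
    exacts [hE₁L2 n d, hE₂L2 f d]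
  have hcov : of (fun k k' => ∫ ω, W ω k i * W ω k' j ∂P)
      = Λe⁻¹ i j • (1 : Matrix (N ⊕ F) (N ⊕ F) ℝ) := by
    ext (n | f) (n' | f') <;> simp [W, one_apply, hE₁cov, hE₂cov, hcross₁₂, hcross₂₁]
  have hA : Aᵀ = A := by
    rw [transpose_nonsing_inv, transpose_add, transpose_mul, transpose_mul, transpose_transpose,
      transpose_transpose]
  have hGram : G * Gᵀ = A := by
    rw [fromCols_mul_transpose_fromCols, transpose_mul, transpose_mul, transpose_transpose, hA]
    calc A * Xᵀ * (X * A) + A * S * (Sᵀ * A) = A * (Xᵀ * X + S * Sᵀ) * A := by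
          simp only [Matrix.mul_add, Matrix.add_mul, Matrix.mul_assoc]
      _ = A := nonsing_inv_mul_mul_nonsing_inv _
  simp_rw [← Matrix.sub_apply, hdev]
  rw [integral_mul_apply_mul_mul_apply W hW, hcov, Matrix.mul_smul, Matrix.mul_one, smul_mul,
    hGram, Matrix.smul_apply, smul_eq_mul]

/-- Covariance of the noise injection sampler (Macau, Appendix E): with
`β̃ = (XᵀX + Λ)⁻¹ (Xᵀ(U + E₁) + S E₂)` and `β̂ = (XᵀX + Λ)⁻¹ Xᵀ U`, under
the stated first and second moment assumptions on the noise matrices,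
`E[(β̃_{·i} − β̂_{·i})(β̃_{·j} − β̂_{·j})ᵀ] = (Λ_e⁻¹)_{ij} (XᵀX + Λ)⁻¹`
entrywise, for all columns `i, j`. -/
theorem noise_injection_covariance
    {F D N : Type*} [Fintype F] [Fintype D] [Fintype N]
    [DecidableEq F] [DecidableEq N] [DecidableEq D]
    (X : Matrix N F ℝ) (U : Matrix N D ℝ) (Λ S : Matrix F F ℝ)
    (hΛ : Λ.PosDef) (hS : S * Sᵀ = Λ)
    (Λe : Matrix D D ℝ) (hΛe : IsUnit Λe.det)
    {Ω : Type*} [MeasurableSpace Ω] (P : Measure Ω) [IsProbabilityMeasure P]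
    (E₁ : Ω → Matrix N D ℝ) (E₂ : Ω → Matrix F D ℝ)
    (hE₁L2 : ∀ n d, MemLp (fun ω => E₁ ω n d) 2 P)
    (hE₂L2 : ∀ f d, MemLp (fun ω => E₂ ω f d) 2 P)
    (hE₁mean : ∀ n d, ∫ ω, E₁ ω n d ∂P = 0)
    (hE₂mean : ∀ f d, ∫ ω, E₂ ω f d ∂P = 0)
    (hE₁cov : ∀ (i j : D) (n n' : N),
      ∫ ω, E₁ ω n i * E₁ ω n' j ∂P = Λe⁻¹ i j * (1 : Matrix N N ℝ) n n')
    (hE₂cov : ∀ (i j : D) (f f' : F),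
      ∫ ω, E₂ ω f i * E₂ ω f' j ∂P = Λe⁻¹ i j * (1 : Matrix F F ℝ) f f')
    (hcross₂₁ : ∀ (i j : D) (f : F) (n : N), ∫ ω, E₂ ω f i * E₁ ω n j ∂P = 0)
    (hcross₁₂ : ∀ (i j : D) (n : N) (f : F), ∫ ω, E₁ ω n i * E₂ ω f j ∂P = 0)
    (i j : D) (f f' : F) :
    ∫ ω, (((Xᵀ * X + Λ)⁻¹ * (Xᵀ * (U + E₁ ω) + S * E₂ ω)) f i
            - ((Xᵀ * X + Λ)⁻¹ * (Xᵀ * U)) f i)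
        * (((Xᵀ * X + Λ)⁻¹ * (Xᵀ * (U + E₁ ω) + S * E₂ ω)) f' j
            - ((Xᵀ * X + Λ)⁻¹ * (Xᵀ * U)) f' j) ∂P
      = Λe⁻¹ i j * (Xᵀ * X + Λ)⁻¹ f f' :=
  noise_injection_covariance_general X U Λ S hS Λe P E₁ E₂ hE₁L2 hE₂L2 hE₁cov hE₂cov hcross₂₁
    hcross₁₂ i j f f'
end

section
/- In the setting of the covariance computation for the noise injection sampler (X an N×F real matrix, U an N×D real matrix, Λ an F×F positive definite real matrix, S with S·Sᵀ = Λ, Λ_e an invertible D×D real matrix, and random matrices E₁, E₂ with zero-mean square-integrable entries satisfying E[(E₁)_{·i}((E₁)_{·j})ᵀ] = (Λ_e⁻¹)_{ij} I_N, E[(E₂)_{·i}((E₂)_{·j})ᵀ] = (Λ_e⁻¹)_{ij} I_F, and E[(E₁)_{·i}((E₂)_{·j})ᵀ] = E[(E₂)_{·i}((E₁)_{·j})ᵀ] = 0 for all i,j), define β̃ = (XᵀX + Λ)⁻¹(Xᵀ(U + E₁) + S·E₂) and β̂ = (XᵀX + Λ)⁻¹XᵀU, and let vec(M)(d,f) =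 M(f,d). Then for all (d,f) and (d',f') in D × F, E[(vec(β̃)(d,f) − vec(β̂)(d,f)) · (vec(β̃)(d',f') − vec(β̂)(d',f'))] = (Λ_e⁻¹ ⊗ (XᵀX + Λ)⁻¹)((d,f),(d',f')), i.e., the covariance matrix of vec(β̃) equals the Kronecker product Λ_e⁻¹ ⊗ (XᵀX + Λ)⁻¹. -/
/-!
With `M = XᵀX + S Sᵀ` and `A = [Xᵀ S]`, so that `A Aᵀ = M`, the error is
`β̃ - β̂ = M⁻¹ A W` for the stacked noise `W = [E₁; E₂]`, whose rows are uncorrelated with common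
column covariance `Λ_e⁻¹`. For any fixed `G`, the covariance of `vec (G W)` is then
`Λ_e⁻¹ ⊗ G Gᵀ`, and for `G = M⁻¹ A` one gets `G Gᵀ = M⁻¹ M M⁻¹ = M⁻¹`.
-/

open Matrix MeasureTheory

namespace Matrix

variable {K F R : Type*} [Fintype K] [Fintype F] [DecidableEq F] [Field R]

/-- Holds also when `M` is singular, since then `M⁻¹ = 0`. -/
theorem nonsing_inv_mul_mul_nonsing_inv_s4 (M : Matrix F F R) : M⁻¹ * M * M⁻¹ = M⁻¹ := by
  by_cases hM : IsUnit M.det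
  · rw [nonsing_inv_mul M hM, Matrix.one_mul]
  · simp [nonsing_inv_apply_not_isUnit M hM]

theorem gram_inv_mul_mul_transpose (A : Matrix F K R) :
    (A * Aᵀ)⁻¹ * A * ((A * Aᵀ)⁻¹ * A)ᵀ = (A * Aᵀ)⁻¹ := by
  have hsymm : ((A * Aᵀ)⁻¹)ᵀ = (A * Aᵀ)⁻¹ := by
    rw [transpose_nonsing_inv, transpose_mul, transpose_transpose]
  rw [transpose_mul, hsymm, Matrix.mul_assoc, ← Matrix.mul_assoc A, ← Matrix.mul_assoc,
    nonsing_inv_mul_mul_nonsing_inv_s4]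

end Matrix

section RandomMatrix

variable {Ω K D : Type*} [MeasurableSpace Ω] {P : Measure Ω} [Fintype K] [DecidableEq K]

theorem integral_mul_apply_mul_mul_apply_s4 {F : Type*} (G : Matrix F K ℝ) (W : Ω → Matrix K D ℝ)
    (Γ : Matrix D D ℝ) (hL2 : ∀ k d, MemLp (fun ω => W ω k d) 2 P)
    (hmoment : ∀ i j k l, ∫ ω, W ω k i * W ω l j ∂P = Γ i j * (1 : Matrix K K ℝ) k l)
    (f f' : F) (d d' : D) :
    ∫ ω, (G * W ω) f d * (G * W ω) f' d' ∂P = Γ d d' * (G * Gᵀ) f f' := by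
  have hint : ∀ k l, Integrable (fun ω => W ω k d * W ω l d') P :=
    fun k l => (hL2 k d).integrable_mul (hL2 l d')
  calc ∫ ω, (G * W ω) f d * (G * W ω) f' d' ∂P
      = ∫ ω, ∑ k, ∑ l, G f k * G f' l * (W ω k d * W ω l d') ∂P := by
        congr 1 with ω
        simp only [mul_apply, Finset.sum_mul_sum]
        exact Finset.sum_congr rfl fun k _ => Finset.sum_congr rfl fun l _ => by ring
    _ = ∑ k, ∑ l, G f k * G f' l * ∫ ω, W ω k d * W ω l d' ∂P := by
        rw [integral_finsetSum _ fun k _ =>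
          integrable_finsetSum _ fun l _ => (hint k l).const_mul _]
        refine Finset.sum_congr rfl fun k _ => ?_
        rw [integral_finsetSum _ fun l _ => (hint k l).const_mul _]
        exact Finset.sum_congr rfl fun l _ => integral_const_mul _ _
    _ = Γ d d' * (G * Gᵀ) f f' := by
        simp only [hmoment, one_apply, mul_ite, mul_one, mul_zero, Finset.sum_ite_eq,
          Finset.mem_univ, if_true, mul_apply, transpose_apply, Finset.mul_sum]
        exact Finset.sum_congr rfl fun k _ => by ring

theorem integral_fromRows_mul_fromRows {N F : Type*} [DecidableEq N] [DecidableEq F]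
    (E₁ : Ω → Matrix N D ℝ) (E₂ : Ω → Matrix F D ℝ) (Γ : Matrix D D ℝ)
    (h₁₁ : ∀ (i j : D) (n n' : N),
      ∫ ω, E₁ ω n i * E₁ ω n' j ∂P = Γ i j * (1 : Matrix N N ℝ) n n')
    (h₂₂ : ∀ (i j : D) (f f' : F),
      ∫ ω, E₂ ω f i * E₂ ω f' j ∂P = Γ i j * (1 : Matrix F F ℝ) f f')
    (h₂₁ : ∀ (i j : D) (f : F) (n : N), ∫ ω, E₂ ω f i * E₁ ω n j ∂P = 0)
    (h₁₂ : ∀ (i j : D) (n : N) (f : F), ∫ ω, E₁ ω n i * E₂ ω f j ∂P = 0)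
    (i j : D) (k l : N ⊕ F) :
    ∫ ω, fromRows (E₁ ω) (E₂ ω) k i * fromRows (E₁ ω) (E₂ ω) l j ∂P
      = Γ i j * (1 : Matrix (N ⊕ F) (N ⊕ F) ℝ) k l := by
  rcases k with n | f <;> rcases l with n' | f' <;>
    simp [one_apply, h₁₁, h₂₂, h₂₁, h₁₂]

end RandomMatrix

theorem noise_injection_vec_covariance_general
    {F D N : Type*} [Fintype F] [Fintype D] [Fintype N]
    [DecidableEq F] [DecidableEq N] [DecidableEq D]
    (X : Matrix N F ℝ) (U : Matrix N D ℝ) (Λ S : Matrix F F ℝ)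
    (hS : S * Sᵀ = Λ)
    (Λe : Matrix D D ℝ)
    {Ω : Type*} [MeasurableSpace Ω] (P : Measure Ω)
    (E₁ : Ω → Matrix N D ℝ) (E₂ : Ω → Matrix F D ℝ)
    (hE₁L2 : ∀ n d, MemLp (fun ω => E₁ ω n d) 2 P)
    (hE₂L2 : ∀ f d, MemLp (fun ω => E₂ ω f d) 2 P)
    (hE₁cov : ∀ (i j : D) (n n' : N),
      ∫ ω, E₁ ω n i * E₁ ω n' j ∂P = Λe⁻¹ i j * (1 : Matrix N N ℝ) n n')
    (hE₂cov : ∀ (i j : D) (f f' : F),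
      ∫ ω, E₂ ω f i * E₂ ω f' j ∂P = Λe⁻¹ i j * (1 : Matrix F F ℝ) f f')
    (hcross₂₁ : ∀ (i j : D) (f : F) (n : N), ∫ ω, E₂ ω f i * E₁ ω n j ∂P = 0)
    (hcross₁₂ : ∀ (i j : D) (n : N) (f : F), ∫ ω, E₁ ω n i * E₂ ω f j ∂P = 0)
    (p q : D × F) :
    ∫ ω, (((Xᵀ * X + Λ)⁻¹ * (Xᵀ * (U + E₁ ω) + S * E₂ ω)) p.2 p.1
            - ((Xᵀ * X + Λ)⁻¹ * (Xᵀ * U)) p.2 p.1)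
        * (((Xᵀ * X + Λ)⁻¹ * (Xᵀ * (U + E₁ ω) + S * E₂ ω)) q.2 q.1
            - ((Xᵀ * X + Λ)⁻¹ * (Xᵀ * U)) q.2 q.1) ∂P
      = Matrix.kroneckerMap (· * ·) Λe⁻¹ (Xᵀ * X + Λ)⁻¹ p q := by
  subst hS
  set A : Matrix F (N ⊕ F) ℝ := fromCols Xᵀ S
  have hgram : A * Aᵀ = Xᵀ * X + S * Sᵀ := by
    rw [transpose_fromCols, fromCols_mul_fromRows, transpose_transpose]
  have hnoise : ∀ ω, (Xᵀ * X + S * Sᵀ)⁻¹ * (Xᵀ * (U + E₁ ω) + S * E₂ ω)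
      - (Xᵀ * X + S * Sᵀ)⁻¹ * (Xᵀ * U) = (A * Aᵀ)⁻¹ * A * fromRows (E₁ ω) (E₂ ω) := by
    intro ω
    rw [Matrix.mul_assoc, fromCols_mul_fromRows, hgram]
    simp only [Matrix.mul_add]
    abel
  simp_rw [← Matrix.sub_apply, hnoise]
  rw [integral_mul_apply_mul_mul_apply_s4 _ _ Λe⁻¹ (by rintro (n | f) d <;> simp [hE₁L2, hE₂L2])
    (integral_fromRows_mul_fromRows E₁ E₂ Λe⁻¹ hE₁cov hE₂cov hcross₂₁ hcross₁₂),
    gram_inv_mul_mul_transpose, hgram, kroneckerMap_apply]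

/-- Covariance of `vec(β̃)` for the noise injection sampler (Macau, Appendix E):
with `β̃ = (XᵀX + Λ)⁻¹ (Xᵀ(U + E₁) + S E₂)`, `β̂ = (XᵀX + Λ)⁻¹ Xᵀ U` and
`vec(M)(d, f) = M f d`, the covariance matrix of `vec(β̃)` is the Kronecker
product `Λ_e⁻¹ ⊗ (XᵀX + Λ)⁻¹`. -/
theorem noise_injection_vec_covariance
    {F D N : Type*} [Fintype F] [Fintype D] [Fintype N]
    [DecidableEq F] [DecidableEq N] [DecidableEq D]
    (X : Matrix N F ℝ) (U : Matrix N D ℝ) (Λ S : Matrix F F ℝ)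
    (hΛ : Λ.PosDef) (hS : S * Sᵀ = Λ)
    (Λe : Matrix D D ℝ) (hΛe : IsUnit Λe.det)
    {Ω : Type*} [MeasurableSpace Ω] (P : Measure Ω) [IsProbabilityMeasure P]
    (E₁ : Ω → Matrix N D ℝ) (E₂ : Ω → Matrix F D ℝ)
    (hE₁L2 : ∀ n d, MemLp (fun ω => E₁ ω n d) 2 P)
    (hE₂L2 : ∀ f d, MemLp (fun ω => E₂ ω f d) 2 P)
    (hE₁mean : ∀ n d, ∫ ω, E₁ ω n d ∂P = 0)
    (hE₂mean : ∀ f d, ∫ ω, E₂ ω f d ∂P = 0)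
    (hE₁cov : ∀ (i j : D) (n n' : N),
      ∫ ω, E₁ ω n i * E₁ ω n' j ∂P = Λe⁻¹ i j * (1 : Matrix N N ℝ) n n')
    (hE₂cov : ∀ (i j : D) (f f' : F),
      ∫ ω, E₂ ω f i * E₂ ω f' j ∂P = Λe⁻¹ i j * (1 : Matrix F F ℝ) f f')
    (hcross₂₁ : ∀ (i j : D) (f : F) (n : N), ∫ ω, E₂ ω f i * E₁ ω n j ∂P = 0)
    (hcross₁₂ : ∀ (i j : D) (n : N) (f : F), ∫ ω, E₁ ω n i * E₂ ω f j ∂P = 0)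
    (p q : D × F) :
    ∫ ω, (((Xᵀ * X + Λ)⁻¹ * (Xᵀ * (U + E₁ ω) + S * E₂ ω)) p.2 p.1
            - ((Xᵀ * X + Λ)⁻¹ * (Xᵀ * U)) p.2 p.1)
        * (((Xᵀ * X + Λ)⁻¹ * (Xᵀ * (U + E₁ ω) + S * E₂ ω)) q.2 q.1
            - ((Xᵀ * X + Λ)⁻¹ * (Xᵀ * U)) q.2 q.1) ∂P
      = Matrix.kroneckerMap (· * ·) Λe⁻¹ (Xᵀ * X + Λ)⁻¹ p q :=
  noise_injection_vec_covariance_general X U Λ S hS Λe P E₁ E₂ hE₁L2 hE₂L2 hE₁cov hE₂cov hcross₂₁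
    hcross₁₂ p q
end
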